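/- The function h₁(x) = Λ · E[|W|·φ(x|W|)/(C(Λ)+W²)], where W ~ N(0,1), φ(x) = ∫₀ˣ e^{-t²/2} dt, and C(Λ) satisfies 1/Λ = E[W²/(C(Λ)+W²)], satisfies x/(1+x²)^{3/2} ≤ h₁(x) ≤ max(x, 5) for all x > 0. -/

import Mathlib

/-!
Write `f_x(w) = |w| φ(x|w|)/(c + w²)` and `g(w) = w²/(c + w²)`, so that `h₁ = Λ E[f_x(W)]`
and the fixed point equation says `Λ E[g(W)] = 1`.

Upper bound: `φ(y) ≤ y` gives `f_x ≤ x g`, hence `h₁(x) ≤ x`.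

Lower bound: `φ(y) ≥ y e^{-y²/2}` and `c + w² ≤ c + s²w²` with `s = √(1 + x²)` give
`f_x(w) ≥ (x/s²) e^{-(s²-1)w²/2} g(sw)`. The factor `e^{-(s²-1)w²/2}` turns the standard
Gaussian density at `w` into the density at `sw`, so the substitution `u = sw` makes the
expectation of the right-hand side equal to `(x/s³) E[g(W)] = x/(s³Λ)`.
-/

open MeasureTheory ProbabilityTheory

/-- `φ(x) = ∫₀ˣ e^{-t²/2} dt`. -/
noncomputable def phi (x : ℝ) : ℝ := ∫ t in (0 : ℝ)..x, Real.exp (-t ^ 2 / 2)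

/-- `h₁(x) = Λ · E[|W| φ(x|W|)/(c + W²)]`, `W ~ N(0,1)`. -/
noncomputable def h₁ (Λ c x : ℝ) : ℝ :=
  Λ * ∫ w, |w| * phi (x * |w|) / (c + w ^ 2) ∂(gaussianReal 0 1)

open Real

lemma continuous_exp_neg_sq_div_two : Continuous fun t : ℝ => exp (-t ^ 2 / 2) := by
  fun_prop

@[fun_prop]
lemma continuous_phi : Continuous phi :=
  intervalIntegral.continuous_primitive
    (fun a b => continuous_exp_neg_sq_div_two.intervalIntegrable a b) 0

lemma phi_le_self {y : ℝ} (hy : 0 ≤ y) : phi y ≤ y := by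
  have h : phi y ≤ ∫ _ in (0 : ℝ)..y, (1 : ℝ) := by
    refine intervalIntegral.integral_mono_on hy
      (continuous_exp_neg_sq_div_two.intervalIntegrable 0 y) intervalIntegrable_const ?_
    intro t _
    exact exp_le_one_iff.2 (by nlinarith [sq_nonneg t])
  simpa using h

lemma mul_exp_le_phi {y : ℝ} (hy : 0 ≤ y) : y * exp (-y ^ 2 / 2) ≤ phi y := by
  have h : ∫ _ in (0 : ℝ)..y, exp (-y ^ 2 / 2) ≤ phi y := by
    refine intervalIntegral.integral_mono_on hy intervalIntegrable_const
      (continuous_exp_neg_sq_div_two.intervalIntegrable 0 y) ?_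
    rintro t ⟨ht0, hty⟩
    gcongr
  simpa [mul_comm] using h

lemma phi_nonneg {y : ℝ} (hy : 0 ≤ y) : 0 ≤ phi y :=
  (mul_nonneg hy (exp_pos _).le).trans (mul_exp_le_phi hy)

lemma integral_gaussianReal_exp_mul_comp_mul (s : ℝ) (g : ℝ → ℝ) :
    ∫ w, exp (-(s ^ 2 - 1) * w ^ 2 / 2) * g (s * w) ∂gaussianReal 0 1
      = |s|⁻¹ * ∫ w, g w ∂gaussianReal 0 1 := by
  have hpdf : ∀ w, gaussianPDFReal 0 1 w * exp (-(s ^ 2 - 1) * w ^ 2 / 2)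
      = gaussianPDFReal 0 1 (s * w) := by
    intro w
    simp only [gaussianPDFReal, NNReal.coe_one, sub_zero, mul_one, mul_assoc, ← exp_add]
    ring_nf
  simp_rw [integral_gaussianReal_eq_integral_smul one_ne_zero, smul_eq_mul, ← mul_assoc, hpdf]
  simpa [abs_inv] using Measure.integral_comp_mul_left (fun u => gaussianPDFReal 0 1 u * g u) s

section Integrands

variable {c x : ℝ}

lemma integrable_sq_div_add_sq {μ : Measure ℝ} [IsFiniteMeasure μ] (hc : 0 ≤ c) :
    Integrable (fun w => w ^ 2 / (c + w ^ 2)) μ := by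
  refine Integrable.of_bound (by fun_prop : Measurable _).aestronglyMeasurable 1
    (ae_of_all _ fun w => ?_)
  rw [norm_of_nonneg (by positivity)]
  exact div_le_one_of_le₀ (by linarith) (by positivity)

lemma abs_mul_phi_div_nonneg (hc : 0 ≤ c) (hx : 0 ≤ x) (w : ℝ) :
    0 ≤ |w| * phi (x * |w|) / (c + w ^ 2) := by
  have := phi_nonneg (mul_nonneg hx (abs_nonneg w))
  positivity

lemma abs_mul_phi_div_le (hc : 0 ≤ c) (hx : 0 ≤ x) (w : ℝ) :
    |w| * phi (x * |w|) / (c + w ^ 2) ≤ x * (w ^ 2 / (c + w ^ 2)) := by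
  have h : |w| * phi (x * |w|) ≤ x * w ^ 2 :=
    calc |w| * phi (x * |w|) ≤ |w| * (x * |w|) := by
          gcongr; exact phi_le_self (by positivity)
      _ = x * w ^ 2 := by rw [← sq_abs w]; ring
  rw [← mul_div_assoc]
  gcongr

lemma le_abs_mul_phi_div (hc : 0 < c) (hx : 0 ≤ x) {s : ℝ} (hs : s ^ 2 = 1 + x ^ 2) (w : ℝ) :
    x / s ^ 2 * (exp (-(s ^ 2 - 1) * w ^ 2 / 2) * ((s * w) ^ 2 / (c + (s * w) ^ 2)))
      ≤ |w| * phi (x * |w|) / (c + w ^ 2) := by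
  have hphi : x * w ^ 2 * exp (-x ^ 2 * w ^ 2 / 2) ≤ |w| * phi (x * |w|) :=
    calc x * w ^ 2 * exp (-x ^ 2 * w ^ 2 / 2)
        = |w| * (x * |w| * exp (-(x * |w|) ^ 2 / 2)) := by
          rw [mul_pow, sq_abs, ← sq_abs w]; ring_nf
      _ ≤ |w| * phi (x * |w|) := by gcongr; exact mul_exp_le_phi (by positivity)
  calc x / s ^ 2 * (exp (-(s ^ 2 - 1) * w ^ 2 / 2) * ((s * w) ^ 2 / (c + (s * w) ^ 2)))
      = x * w ^ 2 * exp (-x ^ 2 * w ^ 2 / 2) / (c + (1 + x ^ 2) * w ^ 2) := by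
        rw [mul_pow, hs]; field_simp; ring_nf
    _ ≤ x * w ^ 2 * exp (-x ^ 2 * w ^ 2 / 2) / (c + w ^ 2) := by
        gcongr; nlinarith [sq_nonneg (x * w)]
    _ ≤ |w| * phi (x * |w|) / (c + w ^ 2) := by gcongr

lemma integrable_abs_mul_phi_div {μ : Measure ℝ} [IsFiniteMeasure μ] (hc : 0 ≤ c)
    (hx : 0 ≤ x) :
    Integrable (fun w => |w| * phi (x * |w|) / (c + w ^ 2)) μ := by
  refine ((integrable_sq_div_add_sq hc).const_mul x).mono'
    (by fun_prop : Measurable _).aestronglyMeasurable (ae_of_all _ fun w => ?_)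
  rw [norm_of_nonneg (abs_mul_phi_div_nonneg hc hx w)]
  exact abs_mul_phi_div_le hc hx w

lemma integral_abs_mul_phi_div_le {μ : Measure ℝ} [IsFiniteMeasure μ] (hc : 0 ≤ c)
    (hx : 0 ≤ x) :
    ∫ w, |w| * phi (x * |w|) / (c + w ^ 2) ∂μ ≤ x * ∫ w, w ^ 2 / (c + w ^ 2) ∂μ := by
  rw [← integral_const_mul]
  exact integral_mono_of_nonneg (ae_of_all _ (abs_mul_phi_div_nonneg hc hx))
    ((integrable_sq_div_add_sq hc).const_mul x) (ae_of_all _ (abs_mul_phi_div_le hc hx))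

lemma le_integral_abs_mul_phi_div (hc : 0 < c) (hx : 0 ≤ x) :
    x / (1 + x ^ 2) ^ ((3 : ℝ) / 2) * ∫ w, w ^ 2 / (c + w ^ 2) ∂gaussianReal 0 1
      ≤ ∫ w, |w| * phi (x * |w|) / (c + w ^ 2) ∂gaussianReal 0 1 := by
  set s := √(1 + x ^ 2)
  have hs_pos : 0 < s := sqrt_pos.2 (by positivity)
  have hs : s ^ 2 = 1 + x ^ 2 := sq_sqrt (by positivity)
  have h32 : (1 + x ^ 2) ^ ((3 : ℝ) / 2) = s ^ 2 * |s| := by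
    rw [show (3 : ℝ) / 2 = 1 + 1 / 2 by norm_num, rpow_add (by positivity), rpow_one,
      ← sqrt_eq_rpow, hs, abs_of_pos hs_pos]
  calc x / (1 + x ^ 2) ^ ((3 : ℝ) / 2) * ∫ w, w ^ 2 / (c + w ^ 2) ∂gaussianReal 0 1
      = ∫ w, x / s ^ 2 * (exp (-(s ^ 2 - 1) * w ^ 2 / 2) * ((s * w) ^ 2 / (c + (s * w) ^ 2)))
          ∂gaussianReal 0 1 := by
        rw [integral_const_mul, integral_gaussianReal_exp_mul_comp_mul s (fun u =>
          u ^ 2 / (c + u ^ 2)), h32, ← mul_assoc, div_mul_eq_div_div, div_eq_mul_inv _ |s|]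
    _ ≤ ∫ w, |w| * phi (x * |w|) / (c + w ^ 2) ∂gaussianReal 0 1 :=
        integral_mono_of_nonneg (ae_of_all _ fun w => by positivity)
          (integrable_abs_mul_phi_div hc.le hx) (ae_of_all _ (le_abs_mul_phi_div hc hx hs))

end Integrands

/-- If `c = C(Λ)` solves `1/Λ = E[W²/(c+W²)]`, then for `x > 0`,
`x/(1+x²)^{3/2} ≤ h₁(x) ≤ max(x, 5)`. -/
theorem statement3 (Λ c : ℝ) (hΛ : 1 ≤ Λ) (hc : 0 < c)
    (hfix : 1 / Λ = ∫ w, w ^ 2 / (c + w ^ 2) ∂(gaussianReal 0 1))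
    (x : ℝ) (hx : 0 < x) :
    x / (1 + x ^ 2) ^ ((3 : ℝ) / 2) ≤ h₁ Λ c x ∧ h₁ Λ c x ≤ max x 5 := by
  have hΛ_pos : 0 < Λ := by linarith
  have hΛ_mul : Λ * ∫ w, w ^ 2 / (c + w ^ 2) ∂gaussianReal 0 1 = 1 := by
    rw [← hfix]; field_simp
  constructor
  · calc x / (1 + x ^ 2) ^ ((3 : ℝ) / 2)
        = Λ * (x / (1 + x ^ 2) ^ ((3 : ℝ) / 2)
            * ∫ w, w ^ 2 / (c + w ^ 2) ∂gaussianReal 0 1) := by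
          rw [mul_left_comm, hΛ_mul, mul_one]
      _ ≤ h₁ Λ c x :=
          mul_le_mul_of_nonneg_left (le_integral_abs_mul_phi_div hc hx.le) hΛ_pos.le
  · calc h₁ Λ c x ≤ Λ * (x * ∫ w, w ^ 2 / (c + w ^ 2) ∂gaussianReal 0 1) :=
          mul_le_mul_of_nonneg_left (integral_abs_mul_phi_div_le hc.le hx.le) hΛ_pos.le
      _ = x := by rw [mul_left_comm, hΛ_mul, mul_one]
      _ ≤ max x 5 := le_max_left x 5
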